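/- arXiv:2012.03530 — 9 statements merged into one kernel-verified Lean document; each statement's English description precedes it below -/
import Mathlib

section
/- If the higher order Turán inequality 4(a_k^2 - a_{k-1}a_{k+1})(a_{k+1}^2 - a_k a_{k+2}) ≥ (a_k a_{k+1} - a_{k-1}a_{k+2})^2 holds and a_k a_{k+1}(a_k^2 - a_{k-1}a_{k+1}) ≠ 0, then (a_{k+1}^2/a_k^2)(1 - √(1 - c_k))^2 ≤ (a_{k+1}^2 - a_k a_{k+2})/(a_k^2 - a_{k-1}a_{k+1}) ≤ (a_{k+1}^2/a_k^2)(1 + √(1 - c_k))^2, where c_k = a_k a_{k+2}/a_{k+1}^2, provided c_k ≤ 1. -/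
theorem stmt_0 (a₀ a₁ a₂ a₃ : ℝ)
    (hturan : 4 * (a₁ ^ 2 - a₀ * a₂) * (a₂ ^ 2 - a₁ * a₃) ≥ (a₁ * a₂ - a₀ * a₃) ^ 2)
    (hne : a₁ * a₂ * (a₁ ^ 2 - a₀ * a₂) ≠ 0)
    (hc : a₁ * a₃ / a₂ ^ 2 ≤ 1) :
    (a₂ ^ 2 / a₁ ^ 2) * (1 - Real.sqrt (1 - a₁ * a₃ / a₂ ^ 2)) ^ 2
      ≤ (a₂ ^ 2 - a₁ * a₃) / (a₁ ^ 2 - a₀ * a₂) ∧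
    (a₂ ^ 2 - a₁ * a₃) / (a₁ ^ 2 - a₀ * a₂)
      ≤ (a₂ ^ 2 / a₁ ^ 2) * (1 + Real.sqrt (1 - a₁ * a₃ / a₂ ^ 2)) ^ 2 := by
  have ha1 : a₁ ≠ 0 := by intro h; apply hne; rw [h]; ring
  have ha2 : a₂ ≠ 0 := by intro h; apply hne; rw [h]; ring
  have hT1ne : a₁ ^ 2 - a₀ * a₂ ≠ 0 := by
    intro h; apply hne; rw [h]; ring
  have ha1sq : (0:ℝ) < a₁ ^ 2 := by positivity
  have ha2sq : (0:ℝ) < a₂ ^ 2 := by positivity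
  set s := Real.sqrt (1 - a₁ * a₃ / a₂ ^ 2) with hs
  have hs0 : 0 ≤ s := Real.sqrt_nonneg _
  have hs2 : s ^ 2 = 1 - a₁ * a₃ / a₂ ^ 2 := Real.sq_sqrt (by linarith)
  have hT2 : a₂ ^ 2 - a₁ * a₃ = a₂ ^ 2 * s ^ 2 := by
    field_simp at hs2
    linarith
  have hT2nn : 0 ≤ a₂ ^ 2 - a₁ * a₃ := by rw [hT2]; positivity
  -- T1 must be positive
  have hT1pos : 0 < a₁ ^ 2 - a₀ * a₂ := by
    rcases lt_or_gt_of_ne hT1ne with hneg | hpos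
    · exfalso
      have h2 : a₂ ^ 2 - a₁ * a₃ = 0 := by nlinarith [sq_nonneg (a₁ * a₂ - a₀ * a₃)]
      have h3 : a₁ * a₂ - a₀ * a₃ = 0 := by nlinarith
      have h4 : a₂ * (a₁ ^ 2 - a₀ * a₂) = 0 := by linear_combination a₁ * h3 - a₀ * h2
      rcases mul_eq_zero.mp h4 with h | h
      · exact ha2 h
      · exact hT1ne h
    · exact hpos
  -- key quadratic factorization from the Turán inequality
  have hid : a₂ ^ 2 * a₂ ^ 2 *
      ((a₁ ^ 2 * s ^ 2 - (a₁ ^ 2 - a₀ * a₂) * (1 - s) ^ 2) *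
       (a₁ ^ 2 * s ^ 2 - (a₁ ^ 2 - a₀ * a₂) * (1 + s) ^ 2)) =
      a₁ ^ 2 * a₂ ^ 2 *
      ((a₁ * a₂ - a₀ * a₃) ^ 2 - 4 * (a₁ ^ 2 - a₀ * a₂) * (a₂ ^ 2 - a₁ * a₃)) := by
    linear_combination (-(a₀ * a₂ * (a₀ * a₂ * (a₂ ^ 2 * s ^ 2 + a₂ ^ 2 - a₁ * a₃)
      - 2 * (a₁ ^ 2 - a₀ * a₂) * a₂ ^ 2) - 4 * (a₁ ^ 2 - a₀ * a₂) ^ 2 * a₂ ^ 2)) * hT2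
  have hkey : (a₁ ^ 2 * s ^ 2 - (a₁ ^ 2 - a₀ * a₂) * (1 - s) ^ 2) *
      (a₁ ^ 2 * s ^ 2 - (a₁ ^ 2 - a₀ * a₂) * (1 + s) ^ 2) ≤ 0 := by
    have h5 : a₁ ^ 2 * a₂ ^ 2 *
        ((a₁ * a₂ - a₀ * a₃) ^ 2 - 4 * (a₁ ^ 2 - a₀ * a₂) * (a₂ ^ 2 - a₁ * a₃)) ≤ 0 := by
      have : (a₁ * a₂ - a₀ * a₃) ^ 2 - 4 * (a₁ ^ 2 - a₀ * a₂) * (a₂ ^ 2 - a₁ * a₃) ≤ 0 := by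
        linarith
      nlinarith [mul_pos ha1sq ha2sq]
    nlinarith [mul_pos ha2sq ha2sq, hid]
  have h1 : (a₁ ^ 2 - a₀ * a₂) * (1 - s) ^ 2 ≤ (a₁ ^ 2 - a₀ * a₂) * (1 + s) ^ 2 := by
    nlinarith
  have hlow : (a₁ ^ 2 - a₀ * a₂) * (1 - s) ^ 2 ≤ a₁ ^ 2 * s ^ 2 := by
    by_contra h
    push_neg at h
    have hp1 : a₁ ^ 2 * s ^ 2 - (a₁ ^ 2 - a₀ * a₂) * (1 - s) ^ 2 < 0 := by linarith
    have hp2 : a₁ ^ 2 * s ^ 2 - (a₁ ^ 2 - a₀ * a₂) * (1 + s) ^ 2 < 0 := by linarith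
    exact absurd hkey (not_le.mpr (mul_pos_of_neg_of_neg hp1 hp2))
  have hup : a₁ ^ 2 * s ^ 2 ≤ (a₁ ^ 2 - a₀ * a₂) * (1 + s) ^ 2 := by
    by_contra h
    push_neg at h
    have hp1 : 0 < a₁ ^ 2 * s ^ 2 - (a₁ ^ 2 - a₀ * a₂) * (1 - s) ^ 2 := by linarith
    have hp2 : 0 < a₁ ^ 2 * s ^ 2 - (a₁ ^ 2 - a₀ * a₂) * (1 + s) ^ 2 := by linarith
    exact absurd hkey (not_le.mpr (mul_pos hp1 hp2))
  constructor
  · rw [hT2, div_mul_eq_mul_div, div_le_div_iff₀ ha1sq hT1pos]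
    have h6 := mul_le_mul_of_nonneg_left hlow (le_of_lt ha2sq)
    nlinarith [h6]
  · rw [hT2, div_mul_eq_mul_div, div_le_div_iff₀ hT1pos ha1sq]
    have h6 := mul_le_mul_of_nonneg_left hup (le_of_lt ha2sq)
    nlinarith [h6]
end

section
/- For real numbers c, d with c ≤ 1, d ≠ 1, if 4(1-d)(1-c) ≥ (1 - dc)^2, then (1 - √(1-c))^2 ≤ (1-c)/(1-d) ≤ (1 + √(1-c))^2. -/
theorem stmt_1 (c d : ℝ) (hc : c ≤ 1) (hd : d ≠ 1)
    (h : 4 * (1 - d) * (1 - c) ≥ (1 - d * c) ^ 2) :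
    (1 - Real.sqrt (1 - c)) ^ 2 ≤ (1 - c) / (1 - d) ∧
    (1 - c) / (1 - d) ≤ (1 + Real.sqrt (1 - c)) ^ 2 := by
  have hc' : c < 1 := by
    rcases lt_or_eq_of_le hc with h1 | h1
    · exact h1
    · exfalso; apply hd; nlinarith [sq_nonneg (1 - d)]
  have ht : (0:ℝ) < 1 - c := by linarith
  have hd1 : d < 1 := by
    rcases lt_or_ge d 1 with h1 | h1
    · exact h1
    · exfalso; apply hd; nlinarith [sq_nonneg (1 - d * c)]
  have he : (0:ℝ) < 1 - d := by linarith
  set s := Real.sqrt (1 - c) with hsdef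
  have hs0 : 0 ≤ s := Real.sqrt_nonneg _
  have hs2 : s ^ 2 = 1 - c := Real.sq_sqrt ht.le
  set u := Real.sqrt (1 - d) with hudef
  have hu0 : 0 ≤ u := Real.sqrt_nonneg _
  have hu2 : u ^ 2 = 1 - d := Real.sq_sqrt he.le
  have hus : 0 ≤ u * s := mul_nonneg hu0 hs0
  have hdq : d = 1 - u ^ 2 := by linarith
  have hcq : c = 1 - s ^ 2 := by linarith
  rw [hdq, hcq] at h
  ring_nf at h
  -- h is now a polynomial inequality in u, s; establish key form
  have key : (u^2 + s^2 - u^2*s^2)^2 ≤ 4 * (u*s)^2 := by nlinarith [h]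
  have hXle : u^2 + s^2 - u^2*s^2 ≤ 2*(u*s) := by
    nlinarith [key, sq_nonneg (u^2 + s^2 - u^2*s^2 - 2*(u*s)), hus]
  have hXge : -(2*(u*s)) ≤ u^2 + s^2 - u^2*s^2 := by
    nlinarith [key, sq_nonneg (u^2 + s^2 - u^2*s^2 + 2*(u*s)), hus]
  have hA : u * s ≤ u + s := by
    have h2 : (u*s)^2 ≤ (u+s)^2 := by nlinarith [hXle]
    calc u * s = Real.sqrt ((u*s)^2) := (Real.sqrt_sq hus).symm
      _ ≤ Real.sqrt ((u+s)^2) := Real.sqrt_le_sqrt h2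
      _ = u + s := Real.sqrt_sq (by linarith)
  have habs : |u - s| ≤ u * s := by
    have h2 : (u-s)^2 ≤ (u*s)^2 := by nlinarith [hXge]
    calc |u - s| = Real.sqrt ((u-s)^2) := (Real.sqrt_sq_eq_abs _).symm
      _ ≤ Real.sqrt ((u*s)^2) := Real.sqrt_le_sqrt h2
      _ = u * s := Real.sqrt_sq hus
  obtain ⟨hB', hC'⟩ := abs_le.mp habs
  -- hB' : -(u*s) ≤ u - s, i.e. s ≤ u + u*s ;  hC' : u - s ≤ u*s, i.e. u ≤ s + u*s
  constructor
  · rw [le_div_iff₀ he]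
    have key2 : 0 ≤ (s - u + u*s) * (s + u - u*s) :=
      mul_nonneg (by linarith) (by linarith)
    nlinarith [key2, hu2, hs2]
  · rw [div_le_iff₀ he]
    have key2 : 0 ≤ (u + u*s - s) * (u + u*s + s) :=
      mul_nonneg (by linarith) (by linarith)
    nlinarith [key2, hu2, hs2]
end

section
/- Let {a_k} be a log-concave positive sequence (a_k^2 ≥ a_{k-1}a_{k+1} for all k ≥ 1) satisfying a_{k+2}/a_k ≤ (a_{k+1}^2 - a_k a_{k+2})/(a_k^2 - a_{k-1}a_{k+1}) ≤ a_{k+1}/a_{k-1} for all k ≥ 1 (with nonzero denominators). Then {a_k} satisfies the higher order Turán inequalities: 4(a_k^2 - a_{k-1}a_{k+1})(a_{k+1}^2 - a_k a_{k+2}) ≥ (a_k a_{k+1} - a_{k-1}a_{k+2})^2 for all k ≥ 1. -/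
theorem stmt_3 (a : ℕ → ℝ) (hpos : ∀ k, 0 < a k)
    (hlc : ∀ k, 0 < a (k + 1) ^ 2 - a k * a (k + 2))
    (hsandwich : ∀ k, a (k + 3) / a (k + 1)
        ≤ (a (k + 2) ^ 2 - a (k + 1) * a (k + 3)) / (a (k + 1) ^ 2 - a k * a (k + 2)) ∧
      (a (k + 2) ^ 2 - a (k + 1) * a (k + 3)) / (a (k + 1) ^ 2 - a k * a (k + 2))
        ≤ a (k + 2) / a k) :
    ∀ k, 4 * (a (k + 1) ^ 2 - a k * a (k + 2)) * (a (k + 2) ^ 2 - a (k + 1) * a (k + 3))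
      ≥ (a (k + 1) * a (k + 2) - a k * a (k + 3)) ^ 2 := by
  intro k
  obtain ⟨h1, h2⟩ := hsandwich k
  have hA : 0 < a (k + 1) ^ 2 - a k * a (k + 2) := hlc k
  have hB : 0 < a (k + 2) ^ 2 - a (k + 1) * a (k + 3) := by
    have := hlc (k + 1); linarith [this]
  have hk := hpos k
  have hk1 := hpos (k + 1)
  have hk2 := hpos (k + 2)
  have hk3 := hpos (k + 3)
  rw [div_le_div_iff₀ hk1 hA] at h1
  rw [div_le_div_iff₀ hA hk] at h2
  -- h1 : a (k+3) * A ≤ B * a (k+1), h2 : B * a k ≤ a (k+2) * A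
  nlinarith [mul_pos hA hB, mul_le_mul h1 h2 (by positivity) (by positivity),
    mul_nonneg (mul_nonneg hk2.le hA.le) (sub_nonneg.2 h1),
    mul_nonneg (mul_nonneg hk1.le hB.le) (sub_nonneg.2 h2),
    mul_pos hk1 hk2]
end

section
/- Let {a_k} be a positive sequence with a_k^2 - a_{k-1}a_{k+1} > 0 for all k ≥ 1, and suppose a_{k+2}/a_k ≤ (a_{k+1}^2 - a_k a_{k+2})/(a_k^2 - a_{k-1}a_{k+1}) ≤ a_{k+1}/a_{k-1} for all k ≥ 1. Then {a_k} is 2-log-concave, i.e., (a_{k+1}^2 - a_k a_{k+2})^2 ≥ (a_k^2 - a_{k-1}a_{k+1})(a_{k+2}^2 - a_{k+1}a_{k+3}) for all k ≥ 1. -/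
theorem stmt_4 (a : ℕ → ℝ) (hpos : ∀ k, 0 < a k)
    (hlc : ∀ k, 0 < a (k + 1) ^ 2 - a k * a (k + 2))
    (hsandwich : ∀ k, a (k + 3) / a (k + 1)
        ≤ (a (k + 2) ^ 2 - a (k + 1) * a (k + 3)) / (a (k + 1) ^ 2 - a k * a (k + 2)) ∧
      (a (k + 2) ^ 2 - a (k + 1) * a (k + 3)) / (a (k + 1) ^ 2 - a k * a (k + 2))
        ≤ a (k + 2) / a k) :
    ∀ k, (a (k + 2) ^ 2 - a (k + 1) * a (k + 3)) ^ 2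
      ≥ (a (k + 1) ^ 2 - a k * a (k + 2)) * (a (k + 3) ^ 2 - a (k + 2) * a (k + 4)) := by
  intro k
  have hb0 := hlc k
  have hb1 := hlc (k + 1)
  have h1 := (hsandwich k).1
  have h2 := (hsandwich (k + 1)).2
  simp only [show k + 1 + 1 = k + 2 from rfl, show k + 1 + 2 = k + 3 from rfl,
    show k + 1 + 3 = k + 4 from rfl] at h2 hb1
  have hchain : (a (k + 3) ^ 2 - a (k + 2) * a (k + 4)) / (a (k + 2) ^ 2 - a (k + 1) * a (k + 3))
      ≤ (a (k + 2) ^ 2 - a (k + 1) * a (k + 3)) / (a (k + 1) ^ 2 - a k * a (k + 2)) :=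
    le_trans h2 h1
  have := (div_le_div_iff₀ hb1 hb0).mp hchain
  nlinarith [this]
end

section
/- Let {a_k} be a positive, increasing, log-concave, convex sequence satisfying the inequality (a_{k+1}^2/a_k^2)(1 - √(1-c_k))^2 ≤ (a_{k+1}^2 - a_k a_{k+2})/(a_k^2 - a_{k-1}a_{k+1}) where c_k = a_k a_{k+2}/a_{k+1}^2, with a_k^2 - a_{k-1}a_{k+1} > 0. Then a_{k+1}^2 - a_k a_{k+2} ≥ a_k^2 - a_{k-1}a_{k+1}, i.e. the sequence {a_{k+1}^2 - a_k a_{k+2}} is increasing. -/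
theorem stmt_6 (a₀ a₁ a₂ a₃ : ℝ)
    (h₀ : 0 < a₀) (h₁ : 0 < a₁) (h₂ : 0 < a₂) (h₃ : 0 < a₃)
    (hinc₀ : a₀ ≤ a₁) (hinc₁ : a₁ ≤ a₂) (hinc₂ : a₂ ≤ a₃)
    (hlc : 0 < a₁ ^ 2 - a₀ * a₂)
    (hconv₀ : a₂ - a₁ ≥ a₁ - a₀) (hconv₁ : a₃ - a₂ ≥ a₂ - a₁)
    (hck : a₁ * a₃ / a₂ ^ 2 ≤ 1)
    (hlb : (a₂ ^ 2 / a₁ ^ 2) * (1 - Real.sqrt (1 - a₁ * a₃ / a₂ ^ 2)) ^ 2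
        ≤ (a₂ ^ 2 - a₁ * a₃) / (a₁ ^ 2 - a₀ * a₂)) :
    a₂ ^ 2 - a₁ * a₃ ≥ a₁ ^ 2 - a₀ * a₂ := by
  have h2sq : (0:ℝ) < a₂ ^ 2 := by positivity
  -- √(1 - c) ≤ (a₂ - a₁)/a₂ since (a₂ - a₁)² ≥ a₂² - a₁a₃ (convexity)
  have hkey : Real.sqrt (1 - a₁ * a₃ / a₂ ^ 2) ≤ (a₂ - a₁) / a₂ := by
    have h1 : 1 - a₁ * a₃ / a₂ ^ 2 ≤ ((a₂ - a₁) / a₂) ^ 2 := by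
      have e : 1 - a₁ * a₃ / a₂ ^ 2 = (a₂ ^ 2 - a₁ * a₃) / a₂ ^ 2 := by field_simp
      rw [e, div_pow, div_le_div_iff₀ h2sq h2sq]
      nlinarith [mul_nonneg (mul_nonneg h₁.le (show (0:ℝ) ≤ a₁ + a₃ - 2 * a₂ by linarith)) h2sq.le]
    calc Real.sqrt (1 - a₁ * a₃ / a₂ ^ 2) ≤ Real.sqrt (((a₂ - a₁) / a₂) ^ 2) :=
          Real.sqrt_le_sqrt h1
      _ = (a₂ - a₁) / a₂ := Real.sqrt_sq (div_nonneg (by linarith) h₂.le)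
  have hge : (1:ℝ) ≤ (a₂ ^ 2 / a₁ ^ 2) * (1 - Real.sqrt (1 - a₁ * a₃ / a₂ ^ 2)) ^ 2 := by
    have h12 : a₁ / a₂ ≤ 1 - Real.sqrt (1 - a₁ * a₃ / a₂ ^ 2) := by
      have : (a₂ - a₁) / a₂ = 1 - a₁ / a₂ := by field_simp
      linarith [hkey.trans_eq this]
    have h12' : (a₁ / a₂) ^ 2 ≤ (1 - Real.sqrt (1 - a₁ * a₃ / a₂ ^ 2)) ^ 2 := by
      apply pow_le_pow_left₀ (by positivity) h12
    have : (a₂ ^ 2 / a₁ ^ 2) * (a₁ / a₂) ^ 2 = 1 := by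
      field_simp
    nlinarith [div_pos h2sq (pow_pos h₁ 2)]
  have : (1:ℝ) ≤ (a₂ ^ 2 - a₁ * a₃) / (a₁ ^ 2 - a₀ * a₂) := le_trans hge hlb
  rw [le_div_iff₀ hlc] at this
  linarith
end

section
/- For the binomial coefficients a_k = C(n,k), 0 ≤ k ≤ n, the sandwich inequality holds for 1 ≤ k ≤ n-2: a_{k+2}·(a_k^2 - a_{k-1}a_{k+1}) ≤ a_k·(a_{k+1}^2 - a_k a_{k+2}) and a_{k-1}·(a_{k+1}^2 - a_k a_{k+2}) ≤ a_{k+1}·(a_k^2 - a_{k-1}a_{k+1}). -/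
set_option maxHeartbeats 1000000 in
theorem stmt_10 (n k : ℕ) (hn : 3 ≤ n) (hk1 : 1 ≤ k) (hk2 : k ≤ n - 2) :
    ((n.choose (k + 2) : ℝ) * ((n.choose k : ℝ) ^ 2 - (n.choose (k - 1) : ℝ) * n.choose (k + 1))
      ≤ (n.choose k : ℝ) * ((n.choose (k + 1) : ℝ) ^ 2 - (n.choose k : ℝ) * n.choose (k + 2))) ∧
    ((n.choose (k - 1) : ℝ) * ((n.choose (k + 1) : ℝ) ^ 2 - (n.choose k : ℝ) * n.choose (k + 2))
      ≤ (n.choose (k + 1) : ℝ) * ((n.choose k : ℝ) ^ 2 - (n.choose (k - 1) : ℝ) * n.choose (k + 1))) := by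
  obtain ⟨j, rfl⟩ : ∃ j, k = j + 1 := ⟨k - 1, (Nat.succ_pred_eq_of_pos hk1).symm⟩
  obtain ⟨i, rfl⟩ : ∃ i, n = (j + 1) + 2 + i := by
    refine ⟨n - (j + 3), ?_⟩
    have : j + 3 ≤ n := by omega
    omega
  set n := (j + 1) + 2 + i with hn'
  simp only [Nat.add_sub_cancel]
  set A : ℝ := (n.choose j : ℝ) with hA
  set B : ℝ := (n.choose (j + 1) : ℝ) with hB
  set C : ℝ := (n.choose (j + 1 + 1) : ℝ) with hC
  set D : ℝ := (n.choose (j + 1 + 2) : ℝ) with hD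
  have hApos : 0 < A := by
    have := Nat.choose_pos (show j ≤ n by omega)
    rw [hA]; exact_mod_cast this
  have hBpos : 0 < B := by
    have := Nat.choose_pos (show j + 1 ≤ n by omega)
    rw [hB]; exact_mod_cast this
  have hCpos : 0 < C := by
    have := Nat.choose_pos (show j + 1 + 1 ≤ n by omega)
    rw [hC]; exact_mod_cast this
  have hDpos : 0 < D := by
    have := Nat.choose_pos (show j + 1 + 2 ≤ n by omega)
    rw [hD]; exact_mod_cast this
  have e1 : B * (j + 1 : ℝ) = A * (i + 3 : ℝ) := by
    have h := Nat.choose_succ_right_eq n j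
    have hsub : n - j = i + 3 := by omega
    rw [hsub] at h
    rw [hA, hB]
    exact_mod_cast h
  have e2 : C * (j + 2 : ℝ) = B * (i + 2 : ℝ) := by
    have h := Nat.choose_succ_right_eq n (j + 1)
    have hsub : n - (j + 1) = i + 2 := by omega
    rw [hsub] at h
    rw [hB, hC]
    exact_mod_cast h
  have e3 : D * (j + 3 : ℝ) = C * (i + 1 : ℝ) := by
    have h := Nat.choose_succ_right_eq n (j + 1 + 1)
    have hsub : n - (j + 1 + 1) = i + 1 := by omega
    rw [hsub] at h
    rw [hC, hD]
    exact_mod_cast h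
  have hi : (0:ℝ) ≤ (i:ℝ) := Nat.cast_nonneg i
  have hj : (0:ℝ) ≤ (j:ℝ) := Nat.cast_nonneg j
  have hA' : A = B * (j + 1) / (i + 3) := by
    field_simp
    linarith [e1]
  have hC' : C = B * (i + 2) / (j + 2) := by
    field_simp
    linarith [e2]
  have hD' : D = B * (i + 2) * (i + 1) / ((j + 2) * (j + 3)) := by
    rw [eq_div_iff (by positivity)]
    rw [hC'] at e3
    field_simp at e3
    nlinarith [e3]
  constructor
  · have key : B * (C ^ 2 - B * D) - D * (B ^ 2 - A * C) =
        B ^ 3 * (i + 2) * (2 * i + 2 * j + 8) / ((i + 3) * (j + 2) ^ 2 * (j + 3)) := by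
      rw [hA', hC', hD']
      field_simp
      ring
    nlinarith [key, show (0:ℝ) ≤ B ^ 3 * (i + 2) * (2 * i + 2 * j + 8) / ((i + 3) * (j + 2) ^ 2 * (j + 3)) from by positivity]
  · have key : C * (B ^ 2 - A * C) - A * (C ^ 2 - B * D) =
        B ^ 3 * (i + 2) * (2 * i + 2 * j + 8) / ((i + 3) * (j + 2) ^ 2 * (j + 3)) := by
      rw [hA', hC', hD']
      field_simp
      ring
    nlinarith [key, show (0:ℝ) ≤ B ^ 3 * (i + 2) * (2 * i + 2 * j + 8) / ((i + 3) * (j + 2) ^ 2 * (j + 3)) from by positivity]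
end

section
/- If {a_k} is a positive sequence satisfying a_k^2 ≥ r·a_{k-1}a_{k+1} for all k ≥ 1, where r ≥ 2, then the ratio sequence a_{k+1}/a_k is convex: a_{k+2}/a_{k+1} + a_k/a_{k-1} ≥ 2·a_{k+1}/a_k for all k ≥ 1. -/
theorem stmt_12 (r : ℝ) (hr : 2 ≤ r) (a : ℕ → ℝ) (hpos : ∀ k, 0 < a k)
    (h : ∀ k, a (k + 1) ^ 2 ≥ r * (a k * a (k + 2))) :
    ∀ k, a (k + 3) / a (k + 2) + a (k + 1) / a k ≥ 2 * (a (k + 2) / a (k + 1)) := by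
  intro k
  have p0 := hpos k
  have p1 := hpos (k + 1)
  have p2 := hpos (k + 2)
  have p3 := hpos (k + 3)
  have hk := h k
  have h1 : 2 * (a (k + 2) / a (k + 1)) ≤ a (k + 1) / a k := by
    rw [mul_div_assoc', div_le_div_iff₀ p1 p0]
    nlinarith [mul_pos p0 p2]
  have h2 : 0 < a (k + 3) / a (k + 2) := div_pos p3 p2
  linarith
end

section
/- If {a_k} is a positive sequence satisfying a_k^2 ≥ r·a_{k-1}a_{k+1} for all k ≥ 1, where r ≥ 2, then {a_k} satisfies the sandwich inequality a_{k+2}(a_k^2 - a_{k-1}a_{k+1}) ≤ a_k(a_{k+1}^2 - a_k a_{k+2}) and a_{k-1}(a_{k+1}^2 - a_k a_{k+2}) ≤ a_{k+1}(a_k^2 - a_{k-1}a_{k+1}) for all k ≥ 1. -/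
theorem stmt_13 (r : ℝ) (hr : 2 ≤ r) (a : ℕ → ℝ) (hpos : ∀ k, 0 < a k)
    (h : ∀ k, a (k + 1) ^ 2 ≥ r * (a k * a (k + 2))) :
    ∀ k, a (k + 3) * (a (k + 1) ^ 2 - a k * a (k + 2))
        ≤ a (k + 1) * (a (k + 2) ^ 2 - a (k + 1) * a (k + 3)) ∧
      a k * (a (k + 2) ^ 2 - a (k + 1) * a (k + 3))
        ≤ a (k + 2) * (a (k + 1) ^ 2 - a k * a (k + 2)) := by
  intro k
  have h1 := h k
  have h2 := h (k + 1)
  have p0 := hpos k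
  have p1 := hpos (k + 1)
  have p2 := hpos (k + 2)
  have p3 := hpos (k + 3)
  have e1 : a (k + 1) ^ 2 ≥ 2 * (a k * a (k + 2)) := by nlinarith [mul_pos p0 p2]
  have e2 : a (k + 2) ^ 2 ≥ 2 * (a (k + 1) * a (k + 3)) := by
    have := h (k + 1)
    nlinarith [mul_pos p1 p3]
  constructor
  · nlinarith [mul_pos p0 (mul_pos p2 p3), mul_pos p1 (mul_pos p1 p3)]
  · nlinarith [mul_pos p0 (mul_pos p1 p3), mul_pos p0 (mul_pos p2 p2)]
end

section
/- If {a_k} is a positive sequence satisfying a_k^2 ≥ r·a_{k-1}a_{k+1} for all k ≥ 1, where r ≥ 2, then {a_k} satisfies the higher order Turán inequalities: 4(a_k^2 - a_{k-1}a_{k+1})(a_{k+1}^2 - a_k a_{k+2}) ≥ (a_k a_{k+1} - a_{k-1}a_{k+2})^2 for all k ≥ 1. -/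
theorem stmt_14 (r : ℝ) (hr : 2 ≤ r) (a : ℕ → ℝ) (hpos : ∀ k, 0 < a k)
    (h : ∀ k, a (k + 1) ^ 2 ≥ r * (a k * a (k + 2))) :
    ∀ k, 4 * (a (k + 1) ^ 2 - a k * a (k + 2)) * (a (k + 2) ^ 2 - a (k + 1) * a (k + 3))
      ≥ (a (k + 1) * a (k + 2) - a k * a (k + 3)) ^ 2 := by
  intro k
  have hb := hpos k
  have hc := hpos (k + 1)
  have hd := hpos (k + 2)
  have he := hpos (k + 3)
  have h1 : a (k + 1) ^ 2 ≥ 2 * (a k * a (k + 2)) := by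
    have := h k
    nlinarith [mul_pos hb hd]
  have h2 : a (k + 2) ^ 2 ≥ 2 * (a (k + 1) * a (k + 3)) := by
    have := h (k + 1)
    nlinarith [mul_pos hc he]
  have hbe : 4 * (a k * a (k + 3)) ≤ a (k + 1) * a (k + 2) := by
    have h3 : (2 * (a k * a (k + 2))) * (2 * (a (k + 1) * a (k + 3)))
        ≤ a (k + 1) ^ 2 * a (k + 2) ^ 2 := by
      apply mul_le_mul h1 h2 (by positivity) (by positivity)
    nlinarith [mul_pos hc hd, mul_pos hb he]
  nlinarith [mul_nonneg (sub_nonneg.2 h1) (sub_nonneg.2 h2),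
    mul_pos hb he, mul_pos hc hd,
    mul_nonneg (sub_nonneg.2 hbe) (le_of_lt (mul_pos hc hd)),
    mul_nonneg (le_of_lt (mul_pos hb he))
      (by nlinarith [mul_pos hb he, mul_pos hc hd] :
        (0:ℝ) ≤ 2 * (a (k + 1) * a (k + 2)) - a k * a (k + 3))]
end
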